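/- arXiv:1907.05494 — 6 statements merged into one kernel-verified Lean document; each statement's English description precedes it below -/
import Mathlib

section
/- Chow's theorem for PUFs: if f_x and f_y are two PUFs of size n (i.e., f_x(c) = sign(c·x), f_y(c) = sign(c·y), where c·x ≠ 0 and c·y ≠ 0 for all c ∈ {±1}^n) with equal Chow parameters Σ_{c : f_x(c)=1} c = Σ_{c : f_y(c)=1} c, then f_x = f_y. -/
open Finset

/-- The ±1 value of the i-th coordinate of a challenge encoded as a Boolean vector. -/
def chal {n : ℕ} (c : Fin n → Bool) (i : Fin n) : ℝ := if c i then 1 else -1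

/-- Scalar product c·x between a challenge and a weight vector. -/
def dotcx {n : ℕ} (c : Fin n → Bool) (x : Fin n → ℝ) : ℝ := ∑ i, chal c i * x i

/-- The PUF with weights x: responds `true` iff sign(c·x) = +1. -/
noncomputable def puf {n : ℕ} (x : Fin n → ℝ) (c : Fin n → Bool) : Bool := decide (0 < dotcx c x)

/-- Nondegeneracy: c·x ≠ 0 for every challenge c. -/
def nondeg {n : ℕ} (x : Fin n → ℝ) : Prop := ∀ c : Fin n → Bool, dotcx c x ≠ 0

/-- Chow parameters of a Boolean function. -/
def chow {n : ℕ} (f : (Fin n → Bool) → Bool) (i : Fin n) : ℤ :=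
  ∑ c ∈ Finset.univ.filter (fun c => f c = true), (if c i then (1:ℤ) else -1)

lemma sum_chal_zero {n : ℕ} (i : Fin n) : ∑ c : Fin n → Bool, chal c i = 0 := by
  have hbij : Function.Bijective (fun c : Fin n → Bool => Function.update c i (!c i)) := by
    have hinv : Function.Involutive (fun c : Fin n → Bool => Function.update c i (!c i)) := by
      intro c; funext j
      by_cases hj : j = i
      · subst hj; simp
      · simp [Function.update, hj]
    exact hinv.bijective
  have key : ∑ c : Fin n → Bool, chal (Function.update c i (!c i)) i
      = ∑ c : Fin n → Bool, chal c i :=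
    Fintype.sum_bijective _ hbij _ _ (fun c => rfl)
  have neg : ∀ c : Fin n → Bool, chal (Function.update c i (!c i)) i = -chal c i := by
    intro c; simp [chal]; cases c i <;> simp
  rw [Finset.sum_congr rfl (fun c _ => neg c), Finset.sum_neg_distrib] at key
  linarith

noncomputable def sgnf {n : ℕ} (f : (Fin n → Bool) → Bool) (c : Fin n → Bool) : ℝ :=
  if f c then 1 else -1

lemma sum_sgn_chal {n : ℕ} (f : (Fin n → Bool) → Bool) (i : Fin n) :
    ∑ c : Fin n → Bool, sgnf f c * chal c i = 2 * (chow f i : ℝ) := by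
  have h1 : ∀ c : Fin n → Bool, sgnf f c * chal c i
      = 2 * (if f c then chal c i else 0) - chal c i := by
    intro c; by_cases hc : f c <;> simp [sgnf, hc] <;> ring
  rw [Finset.sum_congr rfl (fun c _ => h1 c), Finset.sum_sub_distrib, sum_chal_zero,
    ← Finset.mul_sum, ← Finset.sum_filter]
  have : (chow f i : ℝ) = ∑ c ∈ Finset.univ.filter (fun c => f c = true), chal c i := by
    rw [chow]; push_cast; apply Finset.sum_congr rfl; intro c _; simp [chal]
  rw [this]; ring


/-- Chow's theorem: two PUFs with equal Chow parameters are identical. -/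
theorem chow_theorem {n : ℕ} (x y : Fin n → ℝ) (hx : nondeg x) (hy : nondeg y)
    (h : ∀ i, chow (puf x) i = chow (puf y) i) : puf x = puf y := by
  have hsign : ∀ (z : Fin n → ℝ), nondeg z → ∀ c,
      (puf z c = true ∧ 0 < dotcx c z) ∨ (puf z c = false ∧ dotcx c z < 0) := by
    intro z hz c
    by_cases hd : 0 < dotcx c z
    · exact Or.inl ⟨by simp [puf, hd], hd⟩
    · exact Or.inr ⟨by simp [puf, hd], lt_of_le_of_ne (not_lt.mp hd) (hz c)⟩
  have hsum : ∀ i, ∑ c : Fin n → Bool,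
      (sgnf (puf x) c - sgnf (puf y) c) * chal c i = 0 := by
    intro i
    have e : ∑ c : Fin n → Bool, (sgnf (puf x) c - sgnf (puf y) c) * chal c i
        = ∑ c : Fin n → Bool, sgnf (puf x) c * chal c i
          - ∑ c : Fin n → Bool, sgnf (puf y) c * chal c i := by
      rw [← Finset.sum_sub_distrib]
      exact Finset.sum_congr rfl (fun c _ => by ring)
    rw [e, sum_sgn_chal, sum_sgn_chal, h i]; ring
  have hzero : ∑ c : Fin n → Bool,
      (sgnf (puf x) c - sgnf (puf y) c) * (dotcx c x - dotcx c y) = 0 := by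
    have e : ∀ c : Fin n → Bool,
        (sgnf (puf x) c - sgnf (puf y) c) * (dotcx c x - dotcx c y)
        = ∑ i, (x i - y i) * ((sgnf (puf x) c - sgnf (puf y) c) * chal c i) := by
      intro c
      simp only [dotcx]
      rw [← Finset.sum_sub_distrib, Finset.mul_sum]
      exact Finset.sum_congr rfl (fun i _ => by ring)
    rw [Finset.sum_congr rfl (fun c _ => e c), Finset.sum_comm]
    apply Finset.sum_eq_zero
    intro i _
    rw [← Finset.mul_sum, hsum i, mul_zero]
  have hnn : ∀ c ∈ (Finset.univ : Finset (Fin n → Bool)),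
      0 ≤ (sgnf (puf x) c - sgnf (puf y) c) * (dotcx c x - dotcx c y) := by
    intro c _
    rcases hsign x hx c with ⟨hpx, hdx⟩ | ⟨hpx, hdx⟩ <;>
      rcases hsign y hy c with ⟨hpy, hdy⟩ | ⟨hpy, hdy⟩ <;>
      simp [sgnf, hpx, hpy] <;> nlinarith
  have heach := (Finset.sum_eq_zero_iff_of_nonneg hnn).mp hzero
  funext c
  by_contra hne
  have hkey := heach c (Finset.mem_univ c)
  rcases hsign x hx c with ⟨hpx, hdx⟩ | ⟨hpx, hdx⟩ <;>
    rcases hsign y hy c with ⟨hpy, hdy⟩ | ⟨hpy, hdy⟩ <;>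
    rw [hpx, hpy] at hne <;> simp [sgnf, hpx, hpy] at hkey hne ⊢ <;> (try rcases hkey with hkey | hkey) <;> nlinarith
end

section
/- Sign stability of Chow parameters: let f = f_x be a PUF of size n with Chow parameters p. If x_i ≥ 0 then p_i ≥ 0, and if x_i ≤ 0 then p_i ≤ 0. -/
/-!
Moving the `i`-th coordinate of a challenge to `sign (x i)` can only increase `c·x`, so it maps
the challenges with response `1` and `c i = -sign (x i)` injectively into those with response `1`
and `c i = sign (x i)`. Hence the latter outnumber the former, which is the sign claim for `p_i`.
-/

open Finset

theorem Finset.card_filter_apply_le_of_update_mem {ι α : Type*} [DecidableEq ι] [DecidableEq α]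
    {s : Finset (ι → α)} {i : ι} {a b : α} (hs : ∀ c ∈ s, Function.update c i b ∈ s) :
    #{c ∈ s | c i = a} ≤ #{c ∈ s | c i = b} := by
  refine card_le_card_of_injOn (Function.update · i b) (fun c hc => ?_) (fun c hc c' hc' h => ?_)
  · simp only [coe_filter, Set.mem_ofPred_eq] at hc ⊢
    exact ⟨hs c hc.1, Function.update_self i b c⟩
  · simp only [coe_filter, Set.mem_ofPred_eq] at hc hc'
    have undo : ∀ d : ι → α, d i = a → Function.update (Function.update d i b) i a = d :=
      fun d hd => by rw [Function.update_idem, ← hd, Function.update_eq_self]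
    rw [← undo c hc.2, ← undo c' hc'.2]
    exact congrArg (Function.update · i a) h

section Chow

variable {n : ℕ}

theorem chow_eq_card_sub_card (f : (Fin n → Bool) → Bool) (i : Fin n) :
    chow f i = (#{c | f c = true ∧ c i = true} : ℤ) - #{c | f c = true ∧ c i = false} := by
  simp [chow, sum_ite, filter_filter, sub_eq_add_neg]

theorem chow_nonneg_of_update_true {f : (Fin n → Bool) → Bool} {i : Fin n}
    (hf : ∀ c, f c = true → f (Function.update c i true) = true) : 0 ≤ chow f i := by
  have hcard := card_filter_apply_le_of_update_mem (s := {c | f c = true}) (a := false)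
    (by simpa using hf)
  rw [chow_eq_card_sub_card]
  simp only [filter_filter] at hcard
  omega

theorem chow_nonpos_of_update_false {f : (Fin n → Bool) → Bool} {i : Fin n}
    (hf : ∀ c, f c = true → f (Function.update c i false) = true) : chow f i ≤ 0 := by
  have hcard := card_filter_apply_le_of_update_mem (s := {c | f c = true}) (a := true)
    (by simpa using hf)
  rw [chow_eq_card_sub_card]
  simp only [filter_filter] at hcard
  omega

end Chow

section Puf

variable {n : ℕ} {x : Fin n → ℝ} {c : Fin n → Bool} {i : Fin n}

theorem neg_one_le_chal : -1 ≤ chal c i := by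
  unfold chal; split_ifs <;> norm_num

theorem chal_le_one : chal c i ≤ 1 := by
  unfold chal; split_ifs <;> norm_num

theorem dotcx_le_dotcx_update {b : Bool}
    (h : chal c i * x i ≤ chal (Function.update c i b) i * x i) :
    dotcx c x ≤ dotcx (Function.update c i b) x := by
  refine sum_le_sum fun j _ => ?_
  rcases eq_or_ne j i with rfl | hj
  · exact h
  · simp [chal, Function.update_of_ne hj]

theorem puf_update_of_dotcx_le {b : Bool} (h : dotcx c x ≤ dotcx (Function.update c i b) x)
    (hc : puf x c = true) : puf x (Function.update c i b) = true := by
  simp only [puf, decide_eq_true_eq] at hc ⊢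
  exact hc.trans_le h

theorem puf_update_true (hx : 0 ≤ x i) (hc : puf x c = true) :
    puf x (Function.update c i true) = true := by
  refine puf_update_of_dotcx_le (dotcx_le_dotcx_update ?_) hc
  simpa [chal] using mul_le_of_le_one_left hx chal_le_one

theorem puf_update_false (hx : x i ≤ 0) (hc : puf x c = true) :
    puf x (Function.update c i false) = true := by
  refine puf_update_of_dotcx_le (dotcx_le_dotcx_update ?_) hc
  simpa [chal] using mul_le_mul_of_nonpos_right neg_one_le_chal hx

end Puf

theorem chow_sign_stability_general {n : ℕ} (x : Fin n → ℝ) (i : Fin n) :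
    (0 ≤ x i → 0 ≤ chow (puf x) i) ∧ (x i ≤ 0 → chow (puf x) i ≤ 0) :=
  ⟨fun hx => chow_nonneg_of_update_true fun _ => puf_update_true hx,
    fun hx => chow_nonpos_of_update_false fun _ => puf_update_false hx⟩

/-- sign stability of Chow parameters. -/
theorem chow_sign_stability {n : ℕ} (x : Fin n → ℝ) (hx : nondeg x) (i : Fin n) :
    (0 ≤ x i → 0 ≤ chow (puf x) i) ∧ (x i ≤ 0 → chow (puf x) i ≤ 0) :=
  chow_sign_stability_general x i
end

section
/- Order stability of Chow parameters: let f = f_x be a PUF of size n with Chow parameters p. If x_i ≤ x_j then p_i ≤ p_j. -/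
open Finset

/-- order stability of Chow parameters. -/
theorem chow_order_stability {n : ℕ} (x : Fin n → ℝ) (hx : nondeg x) (i j : Fin n)
    (hij : x i ≤ x j) : chow (puf x) i ≤ chow (puf x) j := by
  rcases eq_or_ne i j with rfl | hne
  · exact le_refl _
  -- swap map
  set s : (Fin n → Bool) → (Fin n → Bool) :=
    fun c k => if k = i then c j else if k = j then c i else c k with hsdef
  have hinv : Function.Involutive s := by
    intro c; funext k
    by_cases hki : k = i
    · subst hki; simp [s, hne, Ne.symm hne]
    · by_cases hkj : k = j
      · subst hkj; simp [s, hne, Ne.symm hne]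
      · simp [s, hki, hkj]
  have hdiff : ∀ c, dotcx (s c) x - dotcx c x = (chal c i - chal c j) * (x j - x i) := by
    intro c
    have h1 : dotcx (s c) x - dotcx c x = ∑ k, (chal (s c) k - chal c k) * x k := by
      simp [dotcx, ← Finset.sum_sub_distrib, sub_mul]
    rw [h1, ← Finset.sum_subset (Finset.subset_univ ({i, j} : Finset (Fin n)))]
    · rw [Finset.sum_pair hne]
      have e1 : s c i = c j := by simp [s]
      have e2 : s c j = c i := by simp [s, Ne.symm hne]
      simp only [chal, e1, e2]
      ring
    · intro k _ hk
      simp only [Finset.mem_insert, Finset.mem_singleton, not_or] at hk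
      have : s c k = c k := by simp [s, hk.1, hk.2]
      rw [chal, chal, this, sub_self, zero_mul]
  -- rewrite chow as sums over univ
  have hchow : ∀ (k : Fin n), chow (puf x) k =
      ∑ c : Fin n → Bool, (if puf x c then (if c k then (1:ℤ) else -1) else 0) := by
    intro k
    rw [chow, Finset.sum_filter]
  rw [hchow i, hchow j, ← sub_nonneg, ← Finset.sum_sub_distrib]
  set g : (Fin n → Bool) → ℤ :=
    fun c => (if puf x c then (if c j then (1:ℤ) else -1) else 0) -
      (if puf x c then (if c i then (1:ℤ) else -1) else 0) with hgdef
  show (0:ℤ) ≤ ∑ c, g c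
  have hsum : ∑ c, g c = ∑ c, g (s c) :=
    (Fintype.sum_bijective s hinv.bijective _ _ (fun c => rfl)).symm
  have hpair : ∀ c, 0 ≤ g c + g (s c) := by
    intro c
    have e1 : s c i = c j := by simp [s]
    have e2 : s c j = c i := by simp [s, Ne.symm hne]
    by_cases hi : c i = true <;> by_cases hj : c j = true
    · simp [g, hi, hj, e1, e2]
    · -- c i = true, c j = false : f c → f (s c)
      have hd : dotcx c x ≤ dotcx (s c) x := by
        have h0 := hdiff c
        have h2 : chal c i - chal c j = 2 := by norm_num [chal, hi, hj]
        nlinarith [h0]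
      have himp : puf x c = true → puf x (s c) = true := by
        simp only [puf, decide_eq_true_eq]
        intro h; linarith
      by_cases h1 : puf x c = true
      · have h2 := himp h1
        simp [g, hi, hj, e1, e2, h1, h2]
      · by_cases h2 : puf x (s c) = true <;> simp [g, hi, hj, e1, e2, h1, h2]
    · -- c i = false, c j = true : f (s c) → f c
      have hd : dotcx (s c) x ≤ dotcx c x := by
        have h0 := hdiff c
        have h2 : chal c i - chal c j = -2 := by norm_num [chal, hi, hj]
        nlinarith [h0]
      have himp : puf x (s c) = true → puf x c = true := by
        simp only [puf, decide_eq_true_eq]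
        intro h; linarith
      by_cases h2 : puf x (s c) = true
      · have h1 := himp h2
        simp [g, hi, hj, e1, e2, h1, h2]
      · by_cases h1 : puf x c = true <;> simp [g, hi, hj, e1, e2, h1, h2]
    · simp [g, hi, hj, e1, e2]
  have : 0 ≤ ∑ c, (g c + g (s c)) := Finset.sum_nonneg (fun c _ => hpair c)
  rw [Finset.sum_add_distrib, ← hsum] at this
  linarith
end

section
/- Uniqueness of the canonical PUF: if f and f' are PUFs in the same G_n-orbit and both are canonical (their Chow parameters satisfy p_1 ≥ p_2 ≥ ⋯ ≥ p_n ≥ 0), then f = f'. -/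
open Finset

/-- The group G_n = S_n × {±1}^n. -/
abbrev Gn (n : ℕ) := Equiv.Perm (Fin n) × (Fin n → ℤˣ)

/-- Product (σ₁,s¹)·(σ₂,s²) = (σ₁∘σ₂, (s¹_i s²_{σ₁(i)})_i). -/
def Gmul {n : ℕ} (g₁ g₂ : Gn n) : Gn n :=
  (g₁.1.trans g₂.1, fun i => g₁.2 i * g₂.2 (g₁.1 i))

/-- Identity element (id, (1,…,1)). -/
def Gone (n : ℕ) : Gn n := (Equiv.refl _, fun _ => 1)

/-- Inverse element. -/
def Ginv {n : ℕ} (g : Gn n) : Gn n := (g.1.symm, fun i => g.2 (g.1.symm i))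

/-- Action of G_n on ℝ^n: (g·x)_i = s_i x_{σ(i)}. -/
def Gact {n : ℕ} (g : Gn n) (x : Fin n → ℝ) : Fin n → ℝ :=
  fun i => ((g.2 i : ℤ) : ℝ) * x (g.1 i)

/-- Action of G_n on ℤ^n: (g·p)_i = s_i p_{σ(i)}. -/
def GactZ {n : ℕ} (g : Gn n) (p : Fin n → ℤ) : Fin n → ℤ :=
  fun i => (g.2 i : ℤ) * p (g.1 i)

/-- Action of G_n on challenges {±1}^n (encoded as Boolean vectors). -/
def GactB {n : ℕ} (g : Gn n) (c : Fin n → Bool) : Fin n → Bool :=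
  fun i => if g.2 i = 1 then c (g.1 i) else !(c (g.1 i))

/-! ### Auxiliary lemmas -/

lemma aux_units (u : ℤˣ) : u = 1 ∨ u = -1 := Int.units_eq_one_or u

lemma aux_GactB_left_inv {n : ℕ} (g : Gn n) (c : Fin n → Bool) :
    GactB (Ginv g) (GactB g c) = c := by
  funext j
  simp only [GactB, Ginv]
  rcases aux_units (g.2 (g.1.symm j)) with h | h <;>
    simp [h, Equiv.apply_symm_apply]

lemma aux_GactB_right_inv {n : ℕ} (g : Gn n) (c : Fin n → Bool) :
    GactB g (GactB (Ginv g) c) = c := by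
  funext j
  simp only [GactB, Ginv]
  rcases aux_units (g.2 j) with h | h <;>
    simp [h, Equiv.symm_apply_apply]

/-- sum of χ(c_i) over all challenges is zero. -/
lemma aux_sum_chal {n : ℕ} (i : Fin n) :
    ∑ c : Fin n → Bool, (if c i then (1:ℝ) else -1) = 0 := by
  have hinv : Function.Involutive (fun c : Fin n → Bool => Function.update c i (!(c i))) := by
    intro c
    funext j
    by_cases hj : j = i
    · subst hj; simp [Function.update_self]
    · simp [Function.update_of_ne hj]
  have := Fintype.sum_bijective _ hinv.bijective
      (fun c : Fin n → Bool => (if (Function.update c i (!(c i))) i then (1:ℝ) else -1))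
      (fun c => if c i then (1:ℝ) else -1) (fun c => rfl)
  have h2 : ∀ c : Fin n → Bool,
      (if (Function.update c i (!(c i))) i then (1:ℝ) else -1)
      = -(if c i then (1:ℝ) else -1) := by
    intro c; simp [Function.update_self]; cases c i <;> simp
  rw [Finset.sum_congr rfl (fun c _ => h2 c)] at this
  rw [Finset.sum_neg_distrib] at this
  linarith [this]

lemma aux_key {n : ℕ} (f : (Fin n → Bool) → Bool) (i : Fin n) :
    ∑ c : Fin n → Bool, (if f c then (1:ℝ) else -1) * chal c i
      = 2 * (chow f i : ℤ) := by
  have hsplit : ∀ c : Fin n → Bool,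
      (if f c then (1:ℝ) else -1) * chal c i
        = 2 * (if f c then chal c i else 0) - chal c i := by
    intro c; cases hf : f c <;> simp <;> ring
  rw [Finset.sum_congr rfl (fun c _ => hsplit c), Finset.sum_sub_distrib]
  have h0 : ∑ c : Fin n → Bool, chal c i = 0 := aux_sum_chal i
  rw [h0, ← Finset.mul_sum]
  have : ∑ c : Fin n → Bool, (if f c then chal c i else 0) = (chow f i : ℝ) := by
    rw [chow]
    push_cast
    rw [Finset.sum_filter]
    refine Finset.sum_congr rfl fun c _ => ?_
    cases hf : f c <;> simp [chal]
  rw [this]; ring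

/-- Chow's theorem for LTFs with nondegenerate weights. -/
lemma aux_chow_inj {n : ℕ} (x y : Fin n → ℝ) (hx : nondeg x) (hy : nondeg y)
    (h : chow (puf x) = chow (puf y)) : puf x = puf y := by
  set F : (Fin n → Bool) → ℝ := fun c => if puf x c then (1:ℝ) else -1 with hF
  set G : (Fin n → Bool) → ℝ := fun c => if puf y c then (1:ℝ) else -1 with hG
  have hS : ∑ c : Fin n → Bool, (F c - G c) * dotcx c x = 0 := by
    have : ∀ c : Fin n → Bool, (F c - G c) * dotcx c x
        = ∑ i, ((F c * chal c i - G c * chal c i) * x i) := by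
      intro c
      rw [dotcx, Finset.mul_sum]
      exact Finset.sum_congr rfl fun i _ => by ring
    rw [Finset.sum_congr rfl (fun c _ => this c), Finset.sum_comm]
    refine Finset.sum_eq_zero fun i _ => ?_
    rw [← Finset.sum_mul, Finset.sum_sub_distrib, aux_key, aux_key, h]
    ring
  have hnn : ∀ c ∈ (Finset.univ : Finset (Fin n → Bool)),
      0 ≤ (F c - G c) * dotcx c x := by
    intro c _
    rcases lt_or_gt_of_ne (hx c) with hneg | hpos
    · have hfx : puf x c = false := by simp [puf]; linarith
      by_cases hfy : puf y c = true
      · have : F c - G c = -2 := by norm_num [hF, hG, hfx, hfy]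
        rw [this]; nlinarith
      · have : F c - G c = 0 := by
          simp only [Bool.not_eq_true] at hfy; norm_num [hF, hG, hfx, hfy]
        rw [this]; simp
    · have hfx : puf x c = true := by simp [puf]; linarith
      by_cases hfy : puf y c = true
      · have : F c - G c = 0 := by norm_num [hF, hG, hfx, hfy]
        rw [this]; simp
      · have : F c - G c = 2 := by
          simp only [Bool.not_eq_true] at hfy; norm_num [hF, hG, hfx, hfy]
        rw [this]; nlinarith
  have hz := (Finset.sum_eq_zero_iff_of_nonneg hnn).mp hS
  funext c
  have hc := hz c (Finset.mem_univ c)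
  by_contra hne
  rcases lt_or_gt_of_ne (hx c) with hneg | hpos
  · have hfx : puf x c = false := by simp [puf]; linarith
    have hfy : puf y c = true := by
      cases hpy : puf y c
      · exact absurd (hfx.trans hpy.symm) hne
      · rfl
    have : F c - G c = -2 := by norm_num [hF, hG, hfx, hfy]
    rw [this] at hc; nlinarith
  · have hfx : puf x c = true := by simp [puf]; linarith
    have hfy : puf y c = false := by
      cases hpy : puf y c
      · rfl
      · exact absurd (hfx.trans hpy.symm) hne
    have : F c - G c = 2 := by norm_num [hF, hG, hfx, hfy]
    rw [this] at hc; nlinarith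

lemma aux_dotcx_Gact {n : ℕ} (g : Gn n) (x : Fin n → ℝ) (c : Fin n → Bool) :
    dotcx c (Gact g x) = dotcx (GactB (Ginv g) c) x := by
  unfold dotcx Gact
  rw [← Equiv.sum_comp g.1 (fun j => chal (GactB (Ginv g) c) j * x j)]
  refine Finset.sum_congr rfl fun i _ => ?_
  have hch : chal (GactB (Ginv g) c) (g.1 i) = ((g.2 i : ℤ) : ℝ) * chal c i := by
    simp only [chal, GactB, Ginv, Equiv.symm_apply_apply]
    rcases aux_units (g.2 i) with h | h <;> rw [h] <;> cases c i <;> norm_num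
  show chal c i * (((g.2 i : ℤ) : ℝ) * x (g.1 i)) = chal (GactB (Ginv g) c) (g.1 i) * x (g.1 i)
  rw [hch]; ring

lemma aux_puf_Gact {n : ℕ} (g : Gn n) (x : Fin n → ℝ) (c : Fin n → Bool) :
    puf (Gact g x) c = puf x (GactB (Ginv g) c) := by
  unfold puf; rw [aux_dotcx_Gact]

def aux_equiv {n : ℕ} (g : Gn n) : (Fin n → Bool) ≃ (Fin n → Bool) :=
  ⟨GactB g, GactB (Ginv g), aux_GactB_left_inv g, aux_GactB_right_inv g⟩

lemma aux_chow_Gact {n : ℕ} (g : Gn n) (x : Fin n → ℝ) :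
    chow (puf (Gact g x)) = GactZ g (chow (puf x)) := by
  funext i
  rw [chow, GactZ, chow, Finset.sum_filter, Finset.sum_filter, Finset.mul_sum]
  rw [← Equiv.sum_comp (aux_equiv g) (fun d => if puf (Gact g x) d = true then (if d i then (1:ℤ) else -1) else 0)]
  refine Finset.sum_congr rfl fun c _ => ?_
  show (if puf (Gact g x) ((aux_equiv g) c) = true then (if ((aux_equiv g) c) i then (1:ℤ) else -1) else 0)
      = (g.2 i : ℤ) * (if puf x c = true then (if c (g.1 i) then (1:ℤ) else -1) else 0)
  rw [show (aux_equiv g) c = GactB g c from rfl, aux_puf_Gact, aux_GactB_left_inv]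
  rcases aux_units (g.2 i) with h | h <;> by_cases hp : puf x c = true <;>
    simp only [GactB, h, hp, if_true, if_false] <;> cases c (g.1 i) <;> norm_num

lemma aux_rev_antitone {n : ℕ} : Antitone (Fin.rev : Fin n → Fin n) :=
  fun _ _ hab => Fin.rev_le_rev.mpr hab

/-- two canonical PUFs in the same orbit are equal. -/
theorem canonical_unique {n : ℕ} (x y : Fin n → ℝ) (hx : nondeg x) (hy : nondeg y)
    (horb : ∃ g : Gn n, puf y = puf (Gact g x))
    (hcx : Antitone (chow (puf x)) ∧ ∀ i, 0 ≤ chow (puf x) i)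
    (hcy : Antitone (chow (puf y)) ∧ ∀ i, 0 ≤ chow (puf y) i) :
    puf x = puf y := by
  obtain ⟨g, hg⟩ := horb
  have hq : chow (puf y) = GactZ g (chow (puf x)) := by rw [hg, aux_chow_Gact]
  set p := chow (puf x) with hp
  set q := chow (puf y) with hq'
  have hqp : ∀ i, q i = p (g.1 i) := by
    intro i
    have h1 := congrFun hq i
    rcases aux_units (g.2 i) with h | h
    · simpa [GactZ, h] using h1
    · have h2 : q i = -(p (g.1 i)) := by simpa [GactZ, h] using h1
      have h3 := hcy.2 i
      have h4 := hcx.2 (g.1 i)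
      omega
  have hm1 : Monotone (p ∘ (Fin.revPerm : Equiv.Perm (Fin n))) := by
    have : (p ∘ (Fin.revPerm : Equiv.Perm (Fin n))) = p ∘ Fin.rev := rfl
    rw [this]; exact hcx.1.comp aux_rev_antitone
  have hm2 : Monotone (p ∘ ((Fin.revPerm : Equiv.Perm (Fin n)).trans g.1)) := by
    have : (p ∘ ((Fin.revPerm : Equiv.Perm (Fin n)).trans g.1)) = q ∘ Fin.rev := by
      funext j
      simp only [Function.comp, Equiv.trans_apply, Fin.revPerm_apply]
      exact (hqp (Fin.rev j)).symm
    rw [this]; exact hcy.1.comp aux_rev_antitone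
  have huniq := Tuple.unique_monotone hm1 hm2
  have hpq : p = q := by
    funext i
    have := congrFun huniq (Fin.rev i)
    simp only [Function.comp, Equiv.trans_apply, Fin.revPerm_apply, Fin.rev_rev] at this
    rw [this, hqp]
  exact aux_chow_inj x y hx hy hpq
end

section
/- If g = (σ, s) ∈ G_n satisfies x'_1 ≥ x'_2 ≥ ⋯ ≥ x'_n ≥ 0 where x' = g·x, then f_{g·x} is the canonical form of the PUF f_x, i.e., the Chow parameters p' of f_{x'} satisfy p'_1 ≥ p'_2 ≥ ⋯ ≥ p'_n ≥ 0. -/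
open Finset

/-- Flipping the i-th bit of a challenge, as a permutation. -/
def flipPerm {n : ℕ} (i : Fin n) : Equiv.Perm (Fin n → Bool) where
  toFun c := Function.update c i (!(c i))
  invFun c := Function.update c i (!(c i))
  left_inv c := by
    funext k
    by_cases hk : k = i
    · subst hk; simp
    · simp [Function.update_of_ne hk]
  right_inv c := by
    funext k
    by_cases hk : k = i
    · subst hk; simp
    · simp [Function.update_of_ne hk]

lemma flipPerm_apply {n : ℕ} (i : Fin n) (c : Fin n → Bool) :
    flipPerm i c = Function.update c i (!(c i)) := rfl

/-- Swapping coordinates i and j of a challenge, as a permutation. -/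
def swapPerm {n : ℕ} (i j : Fin n) : Equiv.Perm (Fin n → Bool) where
  toFun c := c ∘ Equiv.swap i j
  invFun c := c ∘ Equiv.swap i j
  left_inv c := by funext k; simp [Function.comp, Equiv.swap_apply_self]
  right_inv c := by funext k; simp [Function.comp, Equiv.swap_apply_self]

lemma swapPerm_apply {n : ℕ} (i j : Fin n) (c : Fin n → Bool) :
    swapPerm i j c = c ∘ Equiv.swap i j := rfl

lemma dotcx_flip {n : ℕ} (c : Fin n → Bool) (y : Fin n → ℝ) (i : Fin n) :
    dotcx (flipPerm i c) y = dotcx c y - 2 * chal c i * y i := by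
  classical
  rw [flipPerm_apply]
  unfold dotcx
  rw [← Finset.sum_erase_add _ _ (Finset.mem_univ i),
      ← Finset.sum_erase_add _ _ (Finset.mem_univ i)]
  have h1 : ∀ j ∈ Finset.univ.erase i,
      chal (Function.update c i (!(c i))) j * y j = chal c j * y j := by
    intro j hj
    rw [Finset.mem_erase] at hj
    simp [chal, Function.update_of_ne hj.1]
  rw [Finset.sum_congr rfl h1]
  have h2 : chal (Function.update c i (!(c i))) i = - chal c i := by
    cases h : c i <;> simp [chal, h]
  rw [h2]; ring

lemma dotcx_swap {n : ℕ} (c : Fin n → Bool) (y : Fin n → ℝ) (i j : Fin n) (hij : i ≠ j) :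
    dotcx (swapPerm i j c) y = dotcx c y + (chal c j - chal c i) * (y i - y j) := by
  classical
  have key : dotcx (swapPerm i j c) y - dotcx c y
      = ∑ k, (chal (c ∘ Equiv.swap i j) k - chal c k) * y k := by
    rw [swapPerm_apply]
    unfold dotcx
    rw [← Finset.sum_sub_distrib]
    congr 1; funext k; ring
  have hz : ∀ k ∈ (Finset.univ : Finset (Fin n)), k ∉ ({i, j} : Finset (Fin n)) →
      (chal (c ∘ Equiv.swap i j) k - chal c k) * y k = 0 := by
    intro k _ hk
    simp only [Finset.mem_insert, Finset.mem_singleton, not_or] at hk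
    simp [chal, Function.comp, Equiv.swap_apply_of_ne_of_ne hk.1 hk.2]
  rw [← Finset.sum_subset (Finset.subset_univ ({i, j} : Finset (Fin n))) hz] at key
  rw [Finset.sum_insert (by simp [hij]), Finset.sum_singleton] at key
  have hci : chal (c ∘ Equiv.swap i j) i = chal c j := by
    simp [chal, Function.comp, Equiv.swap_apply_left]
  have hcj : chal (c ∘ Equiv.swap i j) j = chal c i := by
    simp [chal, Function.comp, Equiv.swap_apply_right]
  rw [hci, hcj] at key
  linear_combination key

lemma puf_mono {n : ℕ} (y : Fin n → ℝ) {c c' : Fin n → Bool}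
    (h : dotcx c' y ≤ dotcx c y) (h' : puf y c' = true) : puf y c = true := by
  simp only [puf, decide_eq_true_eq] at *
  linarith

lemma sum_nonneg_of_pair {α : Type*} [Fintype α] (F : α → ℤ) (τ : Equiv.Perm α)
    (h : ∀ c, 0 ≤ F c + F (τ c)) : 0 ≤ ∑ c, F c := by
  have h2 : 0 ≤ ∑ c, (F c + F (τ c)) := Finset.sum_nonneg fun c _ => h c
  rw [Finset.sum_add_distrib, Equiv.sum_comp τ F] at h2
  linarith

lemma chow_eq_sum {n : ℕ} (f : (Fin n → Bool) → Bool) (i : Fin n) :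
    chow f i = ∑ c, (if f c = true then (if c i then (1:ℤ) else -1) else 0) := by
  unfold chow; rw [Finset.sum_filter]

lemma chow_nonneg_of {n : ℕ} (y : Fin n → ℝ) (i : Fin n) (h : 0 ≤ y i) :
    0 ≤ chow (puf y) i := by
  classical
  rw [chow_eq_sum]
  apply sum_nonneg_of_pair _ (flipPerm i)
  intro c
  have hdf := dotcx_flip c y i
  have hτi : (flipPerm i c) i = !(c i) := by
    rw [flipPerm_apply]; simp
  cases hci : c i with
  | true =>
    have hch : chal c i = 1 := by simp [chal, hci]
    rw [hch] at hdf
    have hle : dotcx (flipPerm i c) y ≤ dotcx c y := by linarith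
    by_cases hp : puf y c = true
    · by_cases hp' : puf y (flipPerm i c) = true <;> simp [hp, hp', hτi, hci]
    · have hp' : ¬ puf y (flipPerm i c) = true := fun h' => hp (puf_mono y hle h')
      simp [hp, hp']
  | false =>
    have hch : chal c i = -1 := by simp [chal, hci]
    rw [hch] at hdf
    have hle : dotcx c y ≤ dotcx (flipPerm i c) y := by linarith
    by_cases hp' : puf y (flipPerm i c) = true
    · by_cases hp : puf y c = true <;> simp [hp, hp', hτi, hci]
    · have hp : ¬ puf y c = true := fun h' => hp' (puf_mono y hle h')
      simp [hp, hp']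

lemma chow_le_of {n : ℕ} (y : Fin n → ℝ) (i j : Fin n) (h : y j ≤ y i) :
    chow (puf y) j ≤ chow (puf y) i := by
  classical
  rcases eq_or_ne i j with rfl | hij
  · exact le_refl _
  rw [chow_eq_sum, chow_eq_sum, ← sub_nonneg, ← Finset.sum_sub_distrib]
  apply sum_nonneg_of_pair _ (swapPerm i j)
  intro c
  have hds := dotcx_swap c y i j hij
  have hσi : (swapPerm i j c) i = c j := by
    rw [swapPerm_apply]; simp [Function.comp, Equiv.swap_apply_left]
  have hσj : (swapPerm i j c) j = c i := by
    rw [swapPerm_apply]; simp [Function.comp, Equiv.swap_apply_right]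
  cases hci : c i with
  | true =>
    cases hcj : c j with
    | true => simp [hci, hcj, hσi, hσj]
    | false =>
      have hch : chal c j - chal c i = -2 := by simp [chal, hci, hcj]; norm_num
      rw [hch] at hds
      have hle : dotcx (swapPerm i j c) y ≤ dotcx c y := by nlinarith
      by_cases hp : puf y c = true
      · by_cases hp' : puf y (swapPerm i j c) = true <;>
          simp [hp, hp', hσi, hσj, hci, hcj]
      · have hp' : ¬ puf y (swapPerm i j c) = true := fun h' => hp (puf_mono y hle h')
        simp [hp, hp']
  | false =>
    cases hcj : c j with
    | false => simp [hci, hcj, hσi, hσj]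
    | true =>
      have hch : chal c j - chal c i = 2 := by simp [chal, hci, hcj]; norm_num
      rw [hch] at hds
      have hle : dotcx c y ≤ dotcx (swapPerm i j c) y := by nlinarith
      by_cases hp' : puf y (swapPerm i j c) = true
      · by_cases hp : puf y c = true <;>
          simp [hp, hp', hσi, hσj, hci, hcj]
      · have hp : ¬ puf y c = true := fun h' => hp' (puf_mono y hle h')
        simp [hp, hp']

/-- if g·x is nonincreasing and nonnegative then f_{g·x} is canonical. -/
theorem canonical_form {n : ℕ} (x : Fin n → ℝ) (hx : nondeg x) (g : Gn n)
    (hmono : Antitone (Gact g x)) (hpos : ∀ i, 0 ≤ Gact g x i) :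
    Antitone (chow (puf (Gact g x))) ∧ ∀ i, 0 ≤ chow (puf (Gact g x)) i := by
  constructor
  · intro i j hij
    exact chow_le_of (Gact g x) i j (hmono hij)
  · intro i
    exact chow_nonneg_of (Gact g x) i (hpos i)
end

section
/- Key step in Chow's theorem: if f_x, f_y are PUFs with Σ_{c : f_x(c) ≠ f_y(c)} f_x(c)·c = 0 (vector sum in ℤ^n), then f_x = f_y; indeed, taking the inner product with x gives Σ_{c : f_x(c)≠f_y(c)} |c·x| = 0, forcing c·x = 0 on the disagreement set, which must therefore be empty. -/
open Finset

/-- The ±1 value of a response bit. -/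
def pm (b : Bool) : ℤ := if b then 1 else -1

/-- if Σ_{c : f_x(c) ≠ f_y(c)} f_x(c)·c = 0 then f_x = f_y. -/
theorem chow_key_step {n : ℕ} (x y : Fin n → ℝ) (hx : nondeg x) (hy : nondeg y)
    (h : ∀ i : Fin n,
      ∑ c ∈ Finset.univ.filter (fun c : Fin n → Bool => puf x c ≠ puf y c),
        pm (puf x c) * (if c i then (1:ℤ) else -1) = 0) :
    puf x = puf y := by
  classical
  by_contra hne
  have hex : ∃ c, puf x c ≠ puf y c := by
    by_contra h'
    push_neg at h'
    exact hne (funext h')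
  obtain ⟨c0, hc0⟩ := hex
  set S := Finset.univ.filter (fun c : Fin n → Bool => puf x c ≠ puf y c) with hS
  have hc0S : c0 ∈ S := by simp [hS, hc0]
  have hpos : ∀ c ∈ S, 0 < (pm (puf x c) : ℝ) * dotcx c x := by
    intro c _
    rcases lt_trichotomy (dotcx c x) 0 with hlt | heq | hgt
    · have : puf x c = false := by simp [puf]; linarith
      rw [this]; simp [pm]; linarith
    · exact absurd heq (hx c)
    · have : puf x c = true := by simp [puf, hgt]
      rw [this]; simp [pm]; linarith
  have hsum : ∑ c ∈ S, (pm (puf x c) : ℝ) * dotcx c x = 0 := by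
    have : ∀ c ∈ S, (pm (puf x c) : ℝ) * dotcx c x
        = ∑ i, ((pm (puf x c) * (if c i then (1:ℤ) else -1) : ℤ) : ℝ) * x i := by
      intro c _
      simp only [dotcx, Finset.mul_sum, chal]
      refine Finset.sum_congr rfl fun i _ => ?_
      push_cast
      by_cases hci : c i <;> simp [hci] <;> ring
    rw [Finset.sum_congr rfl this, Finset.sum_comm]
    refine Finset.sum_eq_zero fun i _ => ?_
    rw [← Finset.sum_mul, ← Int.cast_sum]
    rw [hS]
    rw [h i]
    simp
  have : (0:ℝ) < ∑ c ∈ S, (pm (puf x c) : ℝ) * dotcx c x :=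
    Finset.sum_pos' (fun c hc => le_of_lt (hpos c hc)) ⟨c0, hc0S, hpos c0 hc0S⟩
  linarith
end
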